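/- For every α > 0 and ε > 0 there exists a constant c = c(α, ε) such that the following holds for all sufficiently large n. Let G be an n-vertex graph such that every pair of disjoint vertex sets X, Y ⊆ V(G) with |X| = |Y| = ⌈ε·n/2⌉ satisfies e_G(X, Y) ≥ c·n. Assign each edge of G a colour chosen independently and uniformly at random from {1, …, ⌈(1+α)·n⌉}. Then with probability 1 − o(1) (as n → ∞, uniformly over all such G), for every pair of disjoint vertex sets X, Y ⊆ V(G) with |X| = |Y| = ⌈ε·n/2⌉, the edges between X and Y receive at least n distinct colours. -/

import Mathlib

/-!
Fix disjoint `X`, `Y` of size `⌈εn/2⌉`; the cut between them has at least `cn` edges. If it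
shows fewer than `n` colours, all its edges are coloured inside one of at most `2 ^ r` colour
sets of size `n - 1`, each of which captures them with probability
`((n - 1) / r) ^ (cn) ≤ (1 + α) ^ (-cn)`. A union bound over the at most `4 ^ n` pairs `(X, Y)`
bounds the failure probability by `4 ^ n 2 ^ r (1 + α) ^ (-cn)`, which is exponentially small in
`n` once `c log (1 + α) > (3 + α) log 2`.
-/

open MeasureTheory

/-- The number of ordered pairs `(x, y) ∈ X × Y` with `x` adjacent to `y` in `G`
(for disjoint `X` and `Y` this is the number of edges between `X` and `Y`). -/
noncomputable def eXY {n : ℕ} (G : SimpleGraph (Fin n)) (X Y : Finset (Fin n)) : ℕ :=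
  {q : Fin n × Fin n | q.1 ∈ X ∧ q.2 ∈ Y ∧ G.Adj q.1 q.2}.ncard

/-- The set of edges of `G` with one endpoint in `X` and the other in `Y`. -/
def betweenEdges {n : ℕ} (G : SimpleGraph (Fin n)) (X Y : Finset (Fin n)) :
    Set (Sym2 (Fin n)) :=
  {e | e ∈ G.edgeSet ∧ ∃ x ∈ X, ∃ y ∈ Y, e = s(x, y)}

/-- The distribution of a uniformly random colouring of all pairs of vertices of `Fin n`
with colours from `Fin r`: the product of independent uniform colours. -/
noncomputable def colourMeasure (n r : ℕ) : Measure (Sym2 (Fin n) → Fin r) :=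
  Measure.pi fun _ => (r : ENNReal)⁻¹ • Measure.count

instance (r : ℕ) : IsFiniteMeasure ((r : ENNReal)⁻¹ • Measure.count : Measure (Fin r)) where
  measure_univ_lt_top := by
    simpa [Measure.count_univ] using
      (ENNReal.inv_mul_le_one (r : ENNReal)).trans_lt ENNReal.one_lt_top

lemma isProbabilityMeasure_colourMeasure (n : ℕ) {r : ℕ} (hr : 0 < r) :
    IsProbabilityMeasure (colourMeasure n r) where
  measure_univ := by
    simp [colourMeasure, Measure.pi_univ, Measure.count_univ, ENNReal.inv_mul_cancel, hr.ne']

lemma one_sub_le_measure_of_compl_subset {Ω : Type*} [MeasurableSpace Ω] {μ : Measure Ω}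
    [IsProbabilityMeasure μ] {s t : Set Ω} {a : ENNReal} (hst : sᶜ ⊆ t) (ht : μ t ≤ a) :
    1 - a ≤ μ s := by
  rw [tsub_le_iff_right, ← measure_univ (μ := μ)]
  exact (measure_univ_le_add_compl s).trans (add_le_add_right ((measure_mono hst).trans ht) _)

lemma colourMeasure_forall_mem (n : ℕ) {r : ℕ} (hr : 0 < r) (S : Finset (Sym2 (Fin n)))
    (T : Finset (Fin r)) :
    colourMeasure n r {ψ | ∀ e ∈ S, ψ e ∈ T} = ((T.card : ENNReal) / r) ^ S.card := by
  classical
  have hpi : {ψ : Sym2 (Fin n) → Fin r | ∀ e ∈ S, ψ e ∈ T}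
      = Set.univ.pi fun e => if e ∈ S then (T : Set (Fin r)) else Set.univ := by
    ext ψ
    simp only [Set.mem_ofPred_eq, Set.mem_univ_pi]
    exact forall_congr' fun e => by split_ifs <;> simp_all
  rw [hpi, colourMeasure, Measure.pi_pi]
  have hfactor (e : Sym2 (Fin n)) :
      ((r : ENNReal)⁻¹ • Measure.count : Measure (Fin r))
        (if e ∈ S then (T : Set (Fin r)) else Set.univ)
        = if e ∈ S then (T.card : ENNReal) / r else 1 := by
    split_ifs
    · simp [ENNReal.div_eq_inv_mul]
    · simp [Measure.count_univ, ENNReal.inv_mul_cancel, hr.ne']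
  simp only [hfactor]
  rw [Finset.prod_ite_mem]
  simp

lemma colourMeasure_ncard_image_le (n : ℕ) {r t : ℕ} (hr : 0 < r) (ht : t ≤ r)
    (S : Set (Sym2 (Fin n))) :
    colourMeasure n r {ψ | (ψ '' S).ncard ≤ t}
      ≤ r.choose t * ((t : ENNReal) / r) ^ S.ncard := by
  classical
  have hcover : {ψ : Sym2 (Fin n) → Fin r | (ψ '' S).ncard ≤ t}
      ⊆ ⋃ T ∈ Finset.univ.powersetCard t, {ψ | ∀ e ∈ S.toFinset, ψ e ∈ T} := by
    intro ψ hψ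
    have hcard : (ψ '' S).toFinset.card ≤ t := by
      rwa [← Set.ncard_eq_toFinset_card']
    obtain ⟨T, hST, -, hT⟩ := Finset.exists_subsuperset_card_eq
      (Finset.subset_univ _) hcard (by simpa using ht)
    refine Set.mem_biUnion (Finset.mem_powersetCard_univ.2 hT) fun e he => hST ?_
    simpa using ⟨e, by simpa using he, rfl⟩
  calc colourMeasure n r {ψ | (ψ '' S).ncard ≤ t}
      ≤ ∑ T ∈ Finset.univ.powersetCard t, colourMeasure n r {ψ | ∀ e ∈ S.toFinset, ψ e ∈ T} :=
        (measure_mono hcover).trans (measure_biUnion_finset_le _ _)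
    _ = r.choose t * ((t : ENNReal) / r) ^ S.ncard := by
        rw [Finset.sum_congr rfl fun T hT => by
          rw [colourMeasure_forall_mem n hr, (Finset.mem_powersetCard_univ.1 hT)]]
        simp [Set.ncard_eq_toFinset_card']

lemma eXY_le_ncard_betweenEdges {n : ℕ} (G : SimpleGraph (Fin n)) {X Y : Finset (Fin n)}
    (hXY : Disjoint X Y) : eXY G X Y ≤ (betweenEdges G X Y).ncard := by
  refine Set.ncard_le_ncard_of_injOn (fun q => s(q.1, q.2))
    (fun q ⟨hx, hy, hadj⟩ => ⟨hadj, q.1, hx, q.2, hy, rfl⟩) ?_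
  rintro ⟨a, b⟩ ⟨ha, -, -⟩ ⟨c, d⟩ ⟨-, hd, -⟩ h
  rcases Sym2.eq_iff.1 h with ⟨rfl, rfl⟩ | ⟨rfl, -⟩
  · rfl
  · exact absurd rfl (hXY.forall_ne_finset ha hd)

lemma colourMeasure_exists_cut_ncard_image_le {n r : ℕ} (G : SimpleGraph (Fin n))
    {k m t : ℕ} (hr : 0 < r) (ht : t ≤ r)
    (hG : ∀ X Y : Finset (Fin n), Disjoint X Y → X.card = k → Y.card = k → m ≤ eXY G X Y) :
    colourMeasure n r {ψ | ∃ X Y : Finset (Fin n), Disjoint X Y ∧ X.card = k ∧ Y.card = k ∧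
        (ψ '' betweenEdges G X Y).ncard ≤ t}
      ≤ ENNReal.ofReal (4 ^ n * 2 ^ r * ((t : ℝ) / r) ^ m) := by
  have hpair (p : Finset (Fin n) × Finset (Fin n)) :
      colourMeasure n r {ψ | Disjoint p.1 p.2 ∧ p.1.card = k ∧ p.2.card = k ∧
        (ψ '' betweenEdges G p.1 p.2).ncard ≤ t} ≤ 2 ^ r * ((t : ENNReal) / r) ^ m := by
    by_cases hp : Disjoint p.1 p.2 ∧ p.1.card = k ∧ p.2.card = k
    · obtain ⟨hXY, hX, hY⟩ := hp
      have hm : m ≤ (betweenEdges G p.1 p.2).ncard :=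
        (hG _ _ hXY hX hY).trans (eXY_le_ncard_betweenEdges G hXY)
      have hq : (t : ENNReal) / r ≤ 1 := ENNReal.div_le_of_le_mul (by simpa using ht)
      refine (measure_mono fun ψ hψ => hψ.2.2.2).trans <|
        (colourMeasure_ncard_image_le n hr ht _).trans (mul_le_mul' ?_ ?_)
      · exact_mod_cast Nat.choose_le_two_pow r t
      · exact pow_le_pow_of_le_one zero_le hq hm
    · refine (measure_mono (t := ∅) fun ψ hψ => absurd ⟨hψ.1, hψ.2.1, hψ.2.2.1⟩ hp).trans ?_
      simp
  have hunion : {ψ : Sym2 (Fin n) → Fin r | ∃ X Y : Finset (Fin n), Disjoint X Y ∧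
      X.card = k ∧ Y.card = k ∧ (ψ '' betweenEdges G X Y).ncard ≤ t}
      = ⋃ p : Finset (Fin n) × Finset (Fin n), {ψ | Disjoint p.1 p.2 ∧ p.1.card = k ∧
        p.2.card = k ∧ (ψ '' betweenEdges G p.1 p.2).ncard ≤ t} := by
    ext ψ
    simp
  rw [hunion]
  refine (measure_iUnion_fintype_le _ _).trans ?_
  refine (Finset.sum_le_card_nsmul _ _ _ fun p _ => hpair p).trans_eq ?_
  rw [ENNReal.ofReal_mul (by positivity), ENNReal.ofReal_mul (by positivity),
    ENNReal.ofReal_pow (by positivity), ENNReal.ofReal_pow (by positivity),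
    ENNReal.ofReal_pow (by positivity), ENNReal.ofReal_div_of_pos (by positivity)]
  simp [Fintype.card_finset, nsmul_eq_mul, mul_assoc, ← pow_add, ← two_mul, pow_mul]

/-- Chosen so that `4 ^ n 2 ^ ((1 + α) n + 1) (1 + α) ^ (-c n) = 2 e ^ (-n)`. -/
noncomputable def cutConstant (α : ℝ) : ℝ := ((3 + α) * Real.log 2 + 1) / Real.log (1 + α)

lemma four_pow_mul_two_pow_mul_div_pow_le {α δ : ℝ} (hα : 0 < α) (hδ : 0 < δ) {n r t m : ℕ}
    (ht : t ≤ n) (hn : Real.log (2 / δ) ≤ n) (hr_ge : (1 + α) * n ≤ r)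
    (hr_le : r ≤ (1 + α) * n + 1) (hm : cutConstant α * n ≤ m) :
    4 ^ n * 2 ^ r * ((t : ℝ) / r) ^ m ≤ δ := by
  have hq : (t : ℝ) / r * (1 + α) ≤ 1 := by
    have : (t : ℝ) ≤ n := by exact_mod_cast ht
    rw [div_mul_eq_mul_div]
    exact div_le_one_of_le₀ (by nlinarith) (by positivity)
  have hβ : 0 < Real.log (1 + α) := Real.log_pos (by linarith)
  have hlog2 : 0 ≤ Real.log 2 := Real.log_nonneg one_le_two
  have hexponent : (2 * n + r) * Real.log 2 - m * Real.log (1 + α) ≤ Real.log δ := by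
    have hcβ : cutConstant α * Real.log (1 + α) = (3 + α) * Real.log 2 + 1 :=
      div_mul_cancel₀ _ hβ.ne'
    have hmβ := mul_le_mul_of_nonneg_right hm hβ.le
    have hrlog := mul_le_mul_of_nonneg_right hr_le hlog2
    rw [Real.log_div two_ne_zero hδ.ne'] at hn
    nlinarith
  calc 4 ^ n * 2 ^ r * ((t : ℝ) / r) ^ m ≤ 2 ^ (2 * n + r) / (1 + α) ^ m := by
        rw [pow_add, pow_mul, le_div_iff₀ (by positivity), mul_assoc, ← mul_pow]
        norm_num
        exact mul_le_of_le_one_right (by positivity) (pow_le_one₀ (by positivity) hq)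
    _ ≤ δ := by
        rw [← Real.log_le_log_iff (by positivity) hδ, Real.log_div (by positivity) (by positivity),
          Real.log_pow, Real.log_pow]
        push_cast
        linarith

theorem many_colours_across_cuts_general (α ε : ℝ) (hα : 0 < α) :
    ∃ c : ℝ, ∀ δ : ℝ, 0 < δ → ∃ N : ℕ, ∀ n, N ≤ n →
      ∀ G : SimpleGraph (Fin n),
        (∀ X Y : Finset (Fin n), Disjoint X Y →
          X.card = ⌈ε * n / 2⌉₊ → Y.card = ⌈ε * n / 2⌉₊ →
          c * n ≤ (eXY G X Y : ℝ)) →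
        1 - ENNReal.ofReal δ ≤
          colourMeasure n ⌈(1 + α) * (n : ℝ)⌉₊
            {ψ | ∀ X Y : Finset (Fin n), Disjoint X Y →
              X.card = ⌈ε * n / 2⌉₊ → Y.card = ⌈ε * n / 2⌉₊ →
              n ≤ (ψ '' betweenEdges G X Y).ncard} := by
  refine ⟨cutConstant α, fun δ hδ => ⟨⌈Real.log (2 / δ)⌉₊ + 1, fun n hn G hG => ?_⟩⟩
  set r := ⌈(1 + α) * (n : ℝ)⌉₊
  have hr_ge : (1 + α) * n ≤ r := Nat.le_ceil _
  have hr_le : (r : ℝ) ≤ (1 + α) * n + 1 := (Nat.ceil_lt_add_one (by positivity)).le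
  have hnr : n ≤ r := by
    exact_mod_cast (le_mul_of_one_le_left n.cast_nonneg (by linarith)).trans hr_ge
  have hr : 0 < r := by omega
  have := isProbabilityMeasure_colourMeasure n hr
  have hbad := colourMeasure_exists_cut_ncard_image_le G hr (t := n - 1) (by omega)
    fun X Y hXY hX hY => Nat.ceil_le.2 (hG X Y hXY hX hY)
  refine one_sub_le_measure_of_compl_subset (fun ψ hψ => ?_) (hbad.trans
    (ENNReal.ofReal_le_ofReal (four_pow_mul_two_pow_mul_div_pow_le hα hδ (n.sub_le 1) ?_ hr_ge hr_le
      (Nat.le_ceil _))))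
  · simp only [Set.mem_compl_iff, Set.mem_ofPred_eq, not_forall, not_le] at hψ
    obtain ⟨X, Y, hXY, hX, hY, hfew⟩ := hψ
    exact ⟨X, Y, hXY, hX, hY, by omega⟩
  · exact (Nat.le_ceil _).trans (by exact_mod_cast (Nat.le_succ _).trans hn)

/-- **Many colours across dense cuts under random colourings.**
For every `α, ε > 0` there is a constant `c` such that for all sufficiently large `n`
(uniformly over all such graphs): if every pair of disjoint vertex sets of size
`⌈ε·n/2⌉` in the `n`-vertex graph `G` spans at least `c·n` edges, then colouring the
edges of `G` independently and uniformly at random with `⌈(1+α)·n⌉` colours yields,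
with probability at least `1 - δ`, at least `n` distinct colours between every pair of
disjoint vertex sets of size `⌈ε·n/2⌉`. -/
theorem many_colours_across_cuts (α ε : ℝ) (hα : 0 < α) (hε : 0 < ε) :
    ∃ c : ℝ, ∀ δ : ℝ, 0 < δ → ∃ N : ℕ, ∀ n, N ≤ n →
      ∀ G : SimpleGraph (Fin n),
        (∀ X Y : Finset (Fin n), Disjoint X Y →
          X.card = ⌈ε * n / 2⌉₊ → Y.card = ⌈ε * n / 2⌉₊ →
          c * n ≤ (eXY G X Y : ℝ)) →
        1 - ENNReal.ofReal δ ≤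
          colourMeasure n ⌈(1 + α) * (n : ℝ)⌉₊
            {ψ | ∀ X Y : Finset (Fin n), Disjoint X Y →
              X.card = ⌈ε * n / 2⌉₊ → Y.card = ⌈ε * n / 2⌉₊ →
              n ≤ (ψ '' betweenEdges G X Y).ncard} :=
  many_colours_across_cuts_general α ε hα
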